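/- Let k ≥ 2 be an even integer and G an even polynomial with real coefficients of degree ≥ 2 satisfying G(0) = 1 and G(−1) = G(−2) = 0, and let T be the associated contour integral. Then there exists a constant C > 0, depending only on k and G, such that |T(y) − 1| ≤ C·y for all real y with 0 < y ≤ 1. -/

import Mathlib

open Complex in
/-- `T(y) = (1/2πi) ∫_{(2)} (Γ(s+k/2)/Γ(k/2)) G(s) y^{-s} ds/s`,
written as an integral over the vertical line `s = 2 + it`. -/
noncomputable def Tint (k : ℕ) (G : Polynomial ℝ) (y : ℝ) : ℂ :=
  (1 / (2 * Real.pi) : ℂ) * ∫ t : ℝ,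
    Complex.Gamma ((2 + (t : ℂ) * Complex.I) + (k : ℂ) / 2) / Complex.Gamma ((k : ℂ) / 2) *
      Polynomial.aeval (2 + (t : ℂ) * Complex.I) G *
      (y : ℂ) ^ (-(2 + (t : ℂ) * Complex.I)) / (2 + (t : ℂ) * Complex.I)

/-!
With `k = 2(q + 1)`, the integrand is `y^{-s} Γ(s) P(s)` for the polynomial
`P(s) = (s + 1)_q G(s) / q!`, which satisfies `P(0) = 1`. Expanding `P` in the rising factorials,
`P = ∑ bₘ (X)ₘ`, and using `Γ(s) (s)ₘ = Γ(s + m)`, the function `Γ(s) P(s)` is the Mellin transform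
of `∑ bₘ uᵐ e^{-u}`. Mellin inversion then gives `T(y) = ∑ bₘ yᵐ e^{-y}` exactly, and `b₀ = P(0) = 1`
makes this `1 + O(y)` on `(0, 1]`.
-/

open Finset Complex MeasureTheory Polynomial

theorem Polynomial.exists_eq_sum_C_mul_ascPochhammer_of_natDegree_le {R : Type*} [CommRing R]
    [IsDomain R] (N : ℕ) {P : R[X]} (hP : P.natDegree ≤ N) :
    ∃ b : ℕ → R, P = ∑ m ∈ range (N + 1), C (b m) * ascPochhammer R m := by
  induction N generalizing P with
  | zero => exact ⟨fun _ => P.coeff 0, by simpa using eq_C_of_natDegree_le_zero hP⟩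
  | succ N ih =>
    have hA : (ascPochhammer R (N + 1)).natDegree = N + 1 := ascPochhammer_natDegree _ _
    have hlead : (ascPochhammer R (N + 1)).coeff (N + 1) = 1 := by
      simpa only [hA] using (monic_ascPochhammer R (N + 1)).coeff_natDegree
    have hQ : (P - C (P.coeff (N + 1)) * ascPochhammer R (N + 1)).natDegree ≤ N := by
      refine natDegree_le_iff_coeff_eq_zero.2 fun M hM => ?_
      rw [coeff_sub, coeff_C_mul]
      obtain rfl | hM := (Nat.succ_le_of_lt hM).eq_or_lt
      · rw [Nat.succ_eq_add_one, hlead, mul_one, sub_self]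
      · rw [coeff_eq_zero_of_natDegree_lt (hP.trans_lt hM),
          coeff_eq_zero_of_natDegree_lt (hA.trans_lt hM), mul_zero, sub_zero]
    obtain ⟨b, hb⟩ := ih hQ
    refine ⟨Function.update b (N + 1) (P.coeff (N + 1)), ?_⟩
    rw [sum_range_succ, Function.update_self, ← sub_eq_iff_eq_add, hb]
    exact sum_congr rfl fun m hm => by
      rw [Function.update_of_ne (mem_range.1 hm).ne]

namespace Complex

theorem ne_neg_natCast_of_re_pos {z : ℂ} (hz : 0 < z.re) (k : ℕ) : z ≠ -k := fun h => by
  have := congrArg re h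
  simp only [neg_re, natCast_re] at this
  linarith [(k.cast_nonneg : (0 : ℝ) ≤ k)]

theorem Gamma_mul_eval_ascPochhammer {z : ℂ} (hz : ∀ k : ℕ, z ≠ -k) (n : ℕ) :
    Gamma z * (ascPochhammer ℂ n).eval z = Gamma (z + n) := by
  rw [← Gamma_add_nat_div_Gamma_eq z hz, mul_div_cancel₀ _ (Gamma_ne_zero hz)]

theorem Gamma_add_succ_div_Gamma_succ_div_self (q : ℕ) {s : ℂ} (hs : ∀ k : ℕ, s ≠ -k) :
    Gamma (s + (q + 1)) / Gamma (q + 1) / s =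
      Gamma s * (C ((q.factorial : ℂ)⁻¹) * (ascPochhammer ℂ q).comp (X + 1)).eval s := by
  have hs0 : s ≠ 0 := by simpa using hs 0
  have h := Gamma_mul_eval_ascPochhammer hs (q + 1)
  rw [ascPochhammer_succ_left, eval_mul, eval_X, Nat.cast_succ] at h
  rw [← h, Gamma_nat_eq_factorial]
  simp only [eval_mul, eval_C, eval_comp, eval_add, eval_X, eval_one]
  field_simp

theorem norm_Gamma_le_Gamma_re {z : ℂ} (hz : 0 < z.re) : ‖Gamma z‖ ≤ Real.Gamma z.re := by
  rw [Gamma_eq_integral hz, GammaIntegral, Real.Gamma_eq_integral hz]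
  refine (norm_integral_le_integral_norm _).trans_eq (setIntegral_congr_fun measurableSet_Ioi ?_)
  intro t ht
  simp [norm_cpow_eq_rpow_re_of_pos ht, Complex.norm_exp]

theorem integrable_Gamma_vertical {σ : ℝ} (hσ : 0 < σ) :
    Integrable fun t : ℝ => Gamma (σ + t * I) := by
  have hint : Integrable fun t : ℝ => (σ ^ 2 + t ^ 2)⁻¹ := by
    refine (integrable_inv_one_add_sq.comp_div hσ.ne').const_mul (σ ^ 2)⁻¹ |>.congr
      (Filter.Eventually.of_forall fun t => ?_)
    field_simp
  have hcont : Continuous fun t : ℝ => Gamma (σ + t * I) :=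
    continuous_iff_continuousAt.2 fun t =>
      (continuousAt_Gamma _ (ne_neg_natCast_of_re_pos (by simpa using hσ))).comp (by fun_prop)
  refine (hint.const_mul (Real.Gamma (σ + 2))).mono' hcont.aestronglyMeasurable
    (Filter.Eventually.of_forall fun t => ?_)
  set s : ℂ := σ + t * I
  have hs : s ≠ 0 := fun h => by simpa [s, hσ.ne'] using congrArg re h
  have hs1 : s + 1 ≠ 0 := by
    simpa using ne_neg_natCast_of_re_pos (z := s + 1) (by simp [s]; linarith) 0
  -- `Γ(s) = Γ(s + 2) / (s (s + 1))` and `|s (s + 1)| ≥ |s|² = σ² + t²`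
  have hΓ : ‖(s + 1) * s‖ * ‖Gamma s‖ ≤ Real.Gamma (σ + 2) := by
    rw [← norm_mul, mul_assoc, ← Gamma_add_one _ hs, ← Gamma_add_one _ hs1, add_assoc,
      one_add_one_eq_two]
    simpa [s] using norm_Gamma_le_Gamma_re (z := s + 2) (by simp [s]; linarith)
  have hsq : σ ^ 2 + t ^ 2 ≤ ‖(s + 1) * s‖ := by
    have h1 : ‖s‖ ^ 2 = σ ^ 2 + t ^ 2 := by
      rw [Complex.sq_norm, normSq_add_mul_I]
    have h2 : ‖s + 1‖ ^ 2 = (σ + 1) ^ 2 + t ^ 2 := by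
      rw [Complex.sq_norm, show s + 1 = (σ + 1 : ℝ) + t * I by push_cast [s]; ring,
        normSq_add_mul_I]
    have h3 : ‖s‖ ≤ ‖s + 1‖ := by
      rw [← pow_le_pow_iff_left₀ (norm_nonneg _) (norm_nonneg _) two_ne_zero, h1, h2]
      nlinarith
    rw [norm_mul, ← h1, sq]
    exact mul_le_mul_of_nonneg_right h3 (norm_nonneg _)
  rw [← div_eq_mul_inv, le_div_iff₀ (by positivity)]
  calc ‖Gamma s‖ * (σ ^ 2 + t ^ 2) ≤ ‖Gamma s‖ * ‖(s + 1) * s‖ := by gcongr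
    _ ≤ Real.Gamma (σ + 2) := by rw [mul_comm]; exact hΓ

end Complex

theorem mellinConvergent_const_mul_pow_mul_exp_neg (c : ℂ) (m : ℕ) {s : ℂ} (hs : 0 < s.re) :
    MellinConvergent (fun u : ℝ => c * ((u : ℂ) ^ m * Real.exp (-u))) s := by
  have h := GammaIntegral_convergent (s := s + m) (by simp; positivity)
  refine MellinConvergent.const_smul ?_ c
  simp_rw [← cpow_natCast, ← smul_eq_mul]
  refine MellinConvergent.cpow_smul.2 (h.congr_fun (fun t _ => ?_) measurableSet_Ioi)
  simp [mul_comm]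

theorem mellin_pow_mul_exp_neg (m : ℕ) {s : ℂ} (hs : 0 < s.re) :
    mellin (fun u : ℝ => (u : ℂ) ^ m * Real.exp (-u)) s = Gamma (s + m) := by
  simp_rw [← cpow_natCast, ← smul_eq_mul, mellin_cpow_smul,
    Gamma_eq_integral (show 0 < (s + m).re by simp; positivity), GammaIntegral_eq_mellin]

noncomputable def expPoly (b : ℕ → ℂ) (n : ℕ) (u : ℝ) : ℂ :=
  ∑ m ∈ range n, b m * ((u : ℂ) ^ m * Real.exp (-u))

section expPoly

variable (b : ℕ → ℂ) (n : ℕ)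

theorem continuous_expPoly : Continuous (expPoly b n) := by
  unfold expPoly; fun_prop

theorem mellinConvergent_expPoly {s : ℂ} (hs : 0 < s.re) : MellinConvergent (expPoly b n) s := by
  simp only [MellinConvergent, expPoly, Finset.smul_sum]
  exact integrable_finsetSum _ fun m _ => mellinConvergent_const_mul_pow_mul_exp_neg (b m) m hs

theorem mellin_expPoly {s : ℂ} (hs : 0 < s.re) :
    mellin (expPoly b n) s = ∑ m ∈ range n, b m * Gamma (s + m) := by
  simp only [mellin, expPoly, Finset.smul_sum]
  rw [integral_finsetSum _ fun m _ => mellinConvergent_const_mul_pow_mul_exp_neg (b m) m hs]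
  refine sum_congr rfl fun m _ => ?_
  rw [← mellin_pow_mul_exp_neg m hs, ← smul_eq_mul, ← mellin_const_smul]
  rfl

theorem mellinInv_eq_expPoly {F : ℂ → ℂ}
    (hF : ∀ s : ℂ, 0 < s.re → F s = ∑ m ∈ range n, b m * Gamma (s + m))
    {σ : ℝ} (hσ : 0 < σ) {y : ℝ} (hy : 0 < y) : mellinInv σ F y = expPoly b n y := by
  have hre (t : ℝ) : 0 < (σ + t * I : ℂ).re := by simpa using hσ
  have hline (t : ℝ) : F (σ + t * I) = mellin (expPoly b n) (σ + t * I) := by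
    rw [hF _ (hre t), mellin_expPoly _ _ (hre t)]
  have hvert : VerticalIntegrable (mellin (expPoly b n)) σ := by
    simp only [VerticalIntegrable, ← hline]
    refine (integrable_finsetSum (range n) fun m _ =>
      (integrable_Gamma_vertical (σ := σ + m) (by positivity)).const_mul (b m)).congr
      (Filter.Eventually.of_forall fun t => ?_)
    simp only [hF _ (hre t)]
    refine sum_congr rfl fun m _ => ?_
    push_cast
    ring_nf
  rw [← mellinInv_mellin_eq σ (expPoly b n) hy (mellinConvergent_expPoly b n (by simpa using hσ))
    hvert (continuous_expPoly b n).continuousAt]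
  simp only [mellinInv, hline]

theorem norm_expPoly_sub_one_le (hb : b 0 = 1) {y : ℝ} (hy : 0 ≤ y) (hy1 : y ≤ 1) :
    ‖expPoly b (n + 1) y - 1‖ ≤ (1 + ∑ m ∈ range n, ‖b (m + 1)‖) * y := by
  have hexp : ‖((Real.exp (-y) : ℝ) : ℂ) - 1‖ ≤ y := by
    rw [← ofReal_one, ← ofReal_sub, norm_real, Real.norm_of_nonpos (by simp [hy])]
    linarith [Real.add_one_le_exp (-y)]
  have hterm (m : ℕ) :
      ‖b (m + 1) * ((y : ℂ) ^ (m + 1) * Real.exp (-y))‖ ≤ ‖b (m + 1)‖ * y := by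
    rw [norm_mul, norm_mul, norm_pow, norm_real, norm_real, Real.norm_of_nonneg hy,
      Real.norm_of_nonneg (Real.exp_nonneg _)]
    gcongr
    calc y ^ (m + 1) * Real.exp (-y) ≤ y ^ (m + 1) :=
          mul_le_of_le_one_right (by positivity) (Real.exp_le_one_iff.2 (by linarith))
      _ ≤ y := pow_le_of_le_one hy hy1 (by omega)
  calc ‖expPoly b (n + 1) y - 1‖
      = ‖(((Real.exp (-y) : ℝ) : ℂ) - 1) +
          ∑ m ∈ range n, b (m + 1) * ((y : ℂ) ^ (m + 1) * Real.exp (-y))‖ := by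
        rw [expPoly, sum_range_succ', hb, pow_zero, one_mul, one_mul]; congr 1; ring
    _ ≤ y + ∑ m ∈ range n, ‖b (m + 1)‖ * y :=
        (norm_add_le _ _).trans
          (add_le_add hexp ((norm_sum_le _ _).trans (sum_le_sum fun m _ => hterm m)))
    _ = (1 + ∑ m ∈ range n, ‖b (m + 1)‖) * y := by rw [← sum_mul]; ring

end expPoly

theorem exists_norm_mellinInv_Gamma_mul_eval_sub_one_le {P : ℂ[X]} (hP : P.eval 0 = 1)
    {σ : ℝ} (hσ : 0 < σ) :
    ∃ C : ℝ, 0 < C ∧ ∀ y : ℝ, 0 < y → y ≤ 1 →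
      ‖mellinInv σ (fun s => Gamma s * P.eval s) y - 1‖ ≤ C * y := by
  obtain ⟨b, hb⟩ := exists_eq_sum_C_mul_ascPochhammer_of_natDegree_le P.natDegree le_rfl
  have hb0 : b 0 = 1 := by
    rw [← hP, hb]
    simp [eval_finsetSum, ascPochhammer_eval_zero]
  have hF (s : ℂ) (hs : 0 < s.re) :
      Gamma s * P.eval s = ∑ m ∈ range (P.natDegree + 1), b m * Gamma (s + m) := by
    conv_lhs => rw [hb]
    simp only [eval_finsetSum, eval_mul, eval_C, mul_sum, mul_left_comm (Gamma s),
      Gamma_mul_eval_ascPochhammer (ne_neg_natCast_of_re_pos hs)]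
  refine ⟨1 + ∑ m ∈ range P.natDegree, ‖b (m + 1)‖, by positivity, fun y hy hy1 => ?_⟩
  rw [mellinInv_eq_expPoly b _ hF hσ hy]
  exact norm_expPoly_sub_one_le b _ hb0 hy.le hy1

noncomputable def tintPoly (q : ℕ) (G : ℝ[X]) : ℂ[X] :=
  C ((q.factorial : ℂ)⁻¹) * (ascPochhammer ℂ q).comp (X + 1) * G.map (algebraMap ℝ ℂ)

theorem tintPoly_eval_zero (q : ℕ) {G : ℝ[X]} (hG : G.eval 0 = 1) :
    (tintPoly q G).eval 0 = 1 := by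
  simp only [tintPoly, eval_mul, eval_C, eval_comp, eval_add, eval_X, eval_one, zero_add,
    ascPochhammer_eval_one, eval_zero_map, hG, map_one]
  simp [Nat.factorial_ne_zero]

theorem Tint_eq_mellinInv (q : ℕ) (G : ℝ[X]) (y : ℝ) :
    Tint (q + 1 + (q + 1)) G y = mellinInv 2 (fun s => Gamma s * (tintPoly q G).eval s) y := by
  simp only [Tint, mellinInv, ofReal_ofNat, real_smul]
  congr 2
  · push_cast; ring
  ext t
  have key := Gamma_add_succ_div_Gamma_succ_div_self q
    (ne_neg_natCast_of_re_pos (by simp : 0 < (2 + t * I : ℂ).re))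
  rw [show ((q + 1 + (q + 1) : ℕ) : ℂ) / 2 = q + 1 by push_cast; ring]
  simp only [tintPoly, eval_mul, smul_eq_mul, aeval_def, eval_map] at key ⊢
  linear_combination (eval₂ (algebraMap ℝ ℂ) (2 + t * I) G * (y : ℂ) ^ (-(2 + t * I))) * key

theorem stmt_8 (k : ℕ) (hk : 2 ≤ k) (hke : Even k) (G : Polynomial ℝ)
    (h0 : G.eval 0 = 1) :
    ∃ C : ℝ, 0 < C ∧ ∀ y : ℝ, 0 < y → y ≤ 1 →
      ‖Tint k G y - 1‖ ≤ C * y := by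
  obtain ⟨r, rfl⟩ := hke
  obtain ⟨q, rfl⟩ : ∃ q, r = q + 1 := ⟨r - 1, by omega⟩
  obtain ⟨C, hC, hCy⟩ :=
    exists_norm_mellinInv_Gamma_mul_eval_sub_one_le (tintPoly_eval_zero q h0) two_pos
  exact ⟨C, hC, fun y hy hy1 => Tint_eq_mellinInv q G y ▸ hCy y hy hy1⟩
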